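/- Fix reals μ > 0, k > 0, η > 0, and d, Δd with 0 ≤ d ≤ 1 and Δd ≥ 0, set g(d) := (1−d)² + η, and let ε, Δε be symmetric real 3×3 matrices with tr ε > 0. Define Δσ := g(d)[2μ Δε^dev + k (tr Δε) I] − 2(1−d)[2μ ε^dev + k (tr ε) I] Δd, and assume tr Δσ = 0. Then tr(ε + Δε) ≥ 0, and the updated positive trace satisfies ⟨tr(ε + Δε)⟩₊ = ⟨tr ε⟩₊ + (2(1−d)/g(d)) ⟨tr ε⟩₊ Δd. -/

import Mathlib

/-! Taking the trace of `Δσ` kills the deviatoric parts, so `tr Δσ = 0` is the scalar equation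
`3k (g(d) tr Δε − 2(1−d) Δd tr ε) = 0`. It fixes `tr Δε = (2(1−d)/g(d)) tr ε Δd ≥ 0`, hence
`tr (ε + Δε) ≥ tr ε > 0` and both positive parts are the traces themselves. -/

open Matrix

/-- Deviatoric part of a 3×3 real matrix. -/
noncomputable def dev (A : Matrix (Fin 3) (Fin 3) ℝ) : Matrix (Fin 3) (Fin 3) ℝ :=
  A - (A.trace / 3) • (1 : Matrix (Fin 3) (Fin 3) ℝ)

noncomputable def elasticStress (μ k : ℝ) (A : Matrix (Fin 3) (Fin 3) ℝ) :
    Matrix (Fin 3) (Fin 3) ℝ :=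
  (2 * μ) • dev A + (k * A.trace) • (1 : Matrix (Fin 3) (Fin 3) ℝ)

theorem trace_dev (A : Matrix (Fin 3) (Fin 3) ℝ) : (dev A).trace = 0 := by
  simp [dev, trace_sub, trace_smul, trace_one]

theorem trace_elasticStress (μ k : ℝ) (A : Matrix (Fin 3) (Fin 3) ℝ) :
    (elasticStress μ k A).trace = 3 * k * A.trace := by
  simp only [elasticStress, trace_add, trace_smul, trace_dev, trace_one, Fintype.card_fin,
    smul_eq_mul]
  push_cast
  ring

theorem trace_eq_of_trace_sub_smul_elasticStress_eq_zero {μ k g c : ℝ} (hk : k ≠ 0)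
    (hg : g ≠ 0) {A B : Matrix (Fin 3) (Fin 3) ℝ}
    (h : (g • elasticStress μ k B - c • elasticStress μ k A).trace = 0) :
    B.trace = c / g * A.trace := by
  rw [trace_sub, trace_smul, trace_smul, trace_elasticStress, trace_elasticStress,
    smul_eq_mul, smul_eq_mul] at h
  have h3k : (3 * k) * (g * B.trace) = (3 * k) * (c * A.trace) := by linarith
  rw [div_mul_eq_mul_div, eq_div_iff hg, mul_comm, mul_left_cancel₀ (by positivity) h3k]

theorem fixed_stress_updated_positive_trace_general
    (μ k η d Δd : ℝ) (hk : 0 < k) (hη : 0 < η)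
    (hd1 : d ≤ 1) (hΔd : 0 ≤ Δd)
    (ε Δε : Matrix (Fin 3) (Fin 3) ℝ)
    (htr : 0 < ε.trace)
    (Δσ : Matrix (Fin 3) (Fin 3) ℝ)
    (hΔσ : Δσ = ((1 - d) ^ 2 + η) •
        ((2 * μ) • dev Δε + (k * Δε.trace) • (1 : Matrix (Fin 3) (Fin 3) ℝ))
      - (2 * (1 - d) * Δd) •
        ((2 * μ) • dev ε + (k * ε.trace) • (1 : Matrix (Fin 3) (Fin 3) ℝ)))
    (h0 : Δσ.trace = 0) :
    0 ≤ (ε + Δε).trace ∧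
      max (ε + Δε).trace 0
        = max ε.trace 0 + 2 * (1 - d) / ((1 - d) ^ 2 + η) * max ε.trace 0 * Δd := by
  have hg : 0 < (1 - d) ^ 2 + η := by positivity
  have hΔtr : Δε.trace = 2 * (1 - d) / ((1 - d) ^ 2 + η) * ε.trace * Δd := by
    rw [trace_eq_of_trace_sub_smul_elasticStress_eq_zero (μ := μ) hk.ne' hg.ne'
      (by rw [hΔσ] at h0; exact h0)]
    ring
  have hincr : 0 ≤ 2 * (1 - d) / ((1 - d) ^ 2 + η) * ε.trace * Δd :=
    mul_nonneg (mul_nonneg (div_nonneg (by linarith) hg.le) htr.le) hΔd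
  have hnn : 0 ≤ (ε + Δε).trace := by
    rw [trace_add, hΔtr]
    linarith
  refine ⟨hnn, ?_⟩
  rw [max_eq_left hnn, max_eq_left htr.le, trace_add, hΔtr]

theorem fixed_stress_updated_positive_trace
    (μ k η d Δd : ℝ) (hμ : 0 < μ) (hk : 0 < k) (hη : 0 < η)
    (hd0 : 0 ≤ d) (hd1 : d ≤ 1) (hΔd : 0 ≤ Δd)
    (ε Δε : Matrix (Fin 3) (Fin 3) ℝ) (hε : ε.IsSymm) (hΔε : Δε.IsSymm)
    (htr : 0 < ε.trace)
    (Δσ : Matrix (Fin 3) (Fin 3) ℝ)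
    (hΔσ : Δσ = ((1 - d) ^ 2 + η) •
        ((2 * μ) • dev Δε + (k * Δε.trace) • (1 : Matrix (Fin 3) (Fin 3) ℝ))
      - (2 * (1 - d) * Δd) •
        ((2 * μ) • dev ε + (k * ε.trace) • (1 : Matrix (Fin 3) (Fin 3) ℝ)))
    (h0 : Δσ.trace = 0) :
    0 ≤ (ε + Δε).trace ∧
      max (ε + Δε).trace 0
        = max ε.trace 0 + 2 * (1 - d) / ((1 - d) ^ 2 + η) * max ε.trace 0 * Δd :=
  fixed_stress_updated_positive_trace_general μ k η d Δd hk hη hd1 hΔd ε Δε htr Δσ hΔσ h0
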